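/- arXiv:1601.04585 — 3 statements merged into one kernel-verified Lean document; each statement's English description precedes it below -/
import Mathlib

section
/- In a triangle T,B,L where |TB| = h, the distance from L to the line TB is a_l with a_l ≥ w/2, h ≥ w > 0, and the angles at T and at B are each at most 90°, every one of the three heights (altitudes) of the triangle has length at least w/√5. -/
/-!
Twice the area of the triangle is any altitude times its base, so each altitude equals
`a_l * h` divided by its base. Since the angles at `T` and `B` are not obtuse, the foot of the
altitude from `L` lies on the segment `TB`, so both `BL ^ 2` and `TL ^ 2` are at most
`h ^ 2 + a_l ^ 2`. Hence every altitude squared is at least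
`h ^ 2 * a_l ^ 2 / (h ^ 2 + a_l ^ 2) = 1 / (1 / h ^ 2 + 1 / a_l ^ 2)`, and this is at least
`1 / (1 / w ^ 2 + 4 / w ^ 2) = w ^ 2 / 5`.
-/

open EuclideanGeometry Metric AffineMap Real RealInnerProductSpace

section LineDistance

variable {V P : Type*} [NormedAddCommGroup V] [InnerProductSpace ℝ V] [MetricSpace P]
  [NormedAddTorsor V P]

theorem inner_vsub_vsub_nonneg_of_angle_le_pi_div_two {p₁ p₂ p₃ : P}
    (h : ∠ p₁ p₂ p₃ ≤ π / 2) : 0 ≤ ⟪p₁ -ᵥ p₂, p₃ -ᵥ p₂⟫ := by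
  rw [← InnerProductGeometry.cos_angle_mul_norm_mul_norm]
  have hcos : 0 ≤ cos (∠ p₁ p₂ p₃) :=
    cos_nonneg_of_neg_pi_div_two_le_of_le (by linarith [angle_nonneg p₁ p₂ p₃, pi_pos]) h
  positivity

theorem exists_infDist_affineSpan_pair_eq_dist_lineMap (p a b : P) :
    ∃ t : ℝ, infDist p line[ℝ, a, b] = dist p (lineMap a b t) ∧
      ⟪p -ᵥ lineMap a b t, b -ᵥ a⟫ = 0 := by
  have : Nonempty line[ℝ, a, b] := ⟨⟨a, left_mem_affineSpan_pair ℝ a b⟩⟩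
  set q := orthogonalProjection line[ℝ, a, b] p
  obtain ⟨t, ht⟩ := mem_affineSpan_pair_iff_exists_lineMap_eq.1 q.2
  refine ⟨t, ?_, ?_⟩
  · rw [ht, dist_orthogonalProjection_eq_infDist]
  · have hdir : b -ᵥ a ∈ line[ℝ, a, b].direction := by
      rw [direction_affineSpan]
      exact vsub_mem_vectorSpan ℝ (by simp) (by simp)
    rw [ht, real_inner_comm]
    exact vsub_orthogonalProjection_mem_direction_orthogonal _ p _ hdir

theorem infDist_affineSpan_pair_sq_mul_norm_sq (p a b : P) :
    infDist p line[ℝ, a, b] ^ 2 * ‖b -ᵥ a‖ ^ 2 =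
      ‖p -ᵥ a‖ ^ 2 * ‖b -ᵥ a‖ ^ 2 - ⟪p -ᵥ a, b -ᵥ a⟫ ^ 2 := by
  obtain ⟨t, hdist, horth⟩ := exists_infDist_affineSpan_pair_eq_dist_lineMap p a b
  have hsplit : p -ᵥ a = (p -ᵥ lineMap a b t) + t • (b -ᵥ a) := by
    rw [lineMap_apply, vsub_vadd_eq_vsub_sub, sub_add_cancel]
  rw [hdist, dist_eq_norm_vsub V, hsplit, norm_add_sq_real, inner_add_left,
    real_inner_smul_left, real_inner_smul_right, norm_smul, real_inner_self_eq_norm_sq,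
    mul_pow, norm_eq_abs, sq_abs, horth]
  ring

theorem infDist_affineSpan_pair_mul_dist_eq (a b c : P) :
    infDist c line[ℝ, a, b] * dist a b = infDist a line[ℝ, b, c] * dist b c := by
  refine (pow_left_inj₀ (mul_nonneg infDist_nonneg dist_nonneg)
    (mul_nonneg infDist_nonneg dist_nonneg) two_ne_zero).1 ?_
  have hcb : c -ᵥ b = (c -ᵥ a) - (b -ᵥ a) := (vsub_sub_vsub_cancel_right c b a).symm
  have hab : a -ᵥ b = -(b -ᵥ a) := (neg_vsub_eq_vsub_rev b a).symm
  rw [mul_pow, mul_pow, dist_eq_norm_vsub' V, dist_eq_norm_vsub' V,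
    infDist_affineSpan_pair_sq_mul_norm_sq, infDist_affineSpan_pair_sq_mul_norm_sq, hcb, hab,
    norm_neg, norm_sub_sq_real, inner_neg_left, inner_sub_right, real_inner_self_eq_norm_sq,
    real_inner_comm (b -ᵥ a)]
  ring

theorem dist_sq_le_dist_sq_add_infDist_sq {a b c : P} (ha : ∠ b a c ≤ π / 2)
    (hb : ∠ a b c ≤ π / 2) :
    dist b c ^ 2 ≤ dist a b ^ 2 + infDist c line[ℝ, a, b] ^ 2 := by
  obtain ⟨t, hdist, horth⟩ := exists_infDist_affineSpan_pair_eq_dist_lineMap c a b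
  rw [hdist, dist_eq_norm_vsub' V b c, dist_eq_norm_vsub' V a b, dist_eq_norm_vsub V c]
  have hca : c -ᵥ a = (c -ᵥ lineMap a b t) + t • (b -ᵥ a) := by
    rw [lineMap_apply, vsub_vadd_eq_vsub_sub, sub_add_cancel]
  set u := b -ᵥ a
  set n := c -ᵥ lineMap a b t
  have hcb : c -ᵥ b = n + (t - 1) • u := by
    rw [← vsub_sub_vsub_cancel_right c b a, hca, sub_smul, one_smul]; abel
  have hab : a -ᵥ b = -u := (neg_vsub_eq_vsub_rev b a).symm
  have hta : 0 ≤ t * ‖u‖ ^ 2 := by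
    have := inner_vsub_vsub_nonneg_of_angle_le_pi_div_two ha
    rwa [hca, inner_add_right, real_inner_comm, horth, real_inner_smul_right,
      real_inner_self_eq_norm_sq, zero_add] at this
  have htb : 0 ≤ (1 - t) * ‖u‖ ^ 2 := by
    have := inner_vsub_vsub_nonneg_of_angle_le_pi_div_two hb
    rw [hab, hcb, inner_neg_left, inner_add_right, real_inner_comm, horth,
      real_inner_smul_right, real_inner_self_eq_norm_sq] at this
    linarith
  have hfoot : (t - 1) ^ 2 * ‖u‖ ^ 2 ≤ ‖u‖ ^ 2 := by
    rcases (sq_nonneg ‖u‖).eq_or_lt with hu | hu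
    · rw [← hu]; simp
    · have ht0 : 0 ≤ t := nonneg_of_mul_nonneg_left hta hu
      have ht1 : t ≤ 1 := by nlinarith
      nlinarith
  rw [hcb, norm_add_sq_real, inner_smul_right, horth, norm_smul, mul_pow, norm_eq_abs,
    sq_abs]
  linarith

end LineDistance

theorem div_sqrt_five_le_of_mul_eq_mul {w h a x s : ℝ} (hw : 0 < w) (hwh : w ≤ h)
    (hwa : w / 2 ≤ a) (hx : 0 ≤ x) (hs : s ^ 2 ≤ h ^ 2 + a ^ 2) (harea : x * s = a * h) :
    w / √5 ≤ x := by
  have hh2 : w ^ 2 ≤ h ^ 2 := pow_le_pow_left₀ hw.le hwh 2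
  have ha2 : w ^ 2 ≤ 4 * a ^ 2 := by nlinarith
  have hpos : 0 < h ^ 2 + a ^ 2 := by nlinarith
  have hah : w ^ 2 * (h ^ 2 + a ^ 2) ≤ 5 * (a * h) ^ 2 := by
    nlinarith [mul_le_mul_of_nonneg_left ha2 (sq_nonneg h),
      mul_le_mul_of_nonneg_left hh2 (sq_nonneg a)]
  have hxs : (a * h) ^ 2 ≤ x ^ 2 * (h ^ 2 + a ^ 2) := by
    rw [← harea, mul_pow]; gcongr
  have hx2 : w ^ 2 ≤ 5 * x ^ 2 := le_of_mul_le_mul_right (by linarith) hpos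
  refine (pow_le_pow_iff_left₀ (by positivity) hx two_ne_zero).1 ?_
  rw [div_pow, sq_sqrt (by norm_num)]
  linarith

theorem stmt_7 (T B L : EuclideanSpace ℝ (Fin 3)) (h w a_l : ℝ)
    (hh : dist T B = h)
    (hal : Metric.infDist L (affineSpan ℝ {T, B} : Set (EuclideanSpace ℝ (Fin 3))) = a_l)
    (hal2 : a_l ≥ w / 2) (hhw : h ≥ w) (hw : 0 < w)
    (hangT : EuclideanGeometry.angle B T L ≤ Real.pi / 2)
    (hangB : EuclideanGeometry.angle T B L ≤ Real.pi / 2) :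
    Metric.infDist L (affineSpan ℝ {T, B} : Set (EuclideanSpace ℝ (Fin 3))) ≥ w / Real.sqrt 5 ∧
    Metric.infDist T (affineSpan ℝ {B, L} : Set (EuclideanSpace ℝ (Fin 3))) ≥ w / Real.sqrt 5 ∧
    Metric.infDist B (affineSpan ℝ {T, L} : Set (EuclideanSpace ℝ (Fin 3))) ≥ w / Real.sqrt 5 := by
  subst hal hh
  have hBT : line[ℝ, B, T] = line[ℝ, T, B] := by rw [Set.pair_comm]
  refine ⟨?_, ?_, ?_⟩
  · have h2 : (2 : ℝ) ≤ √5 := le_sqrt_of_sq_le (by norm_num)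
    exact (div_le_div_of_nonneg_left hw.le two_pos h2).trans hal2
  · exact div_sqrt_five_le_of_mul_eq_mul hw hhw hal2 infDist_nonneg
      (dist_sq_le_dist_sq_add_infDist_sq hangT hangB)
      (infDist_affineSpan_pair_mul_dist_eq T B L).symm
  · have hs := dist_sq_le_dist_sq_add_infDist_sq hangB hangT
    have harea := infDist_affineSpan_pair_mul_dist_eq B T L
    rw [hBT, dist_comm B T] at hs harea
    exact div_sqrt_five_le_of_mul_eq_mul hw hhw hal2 infDist_nonneg hs harea.symm
end

section
/- For the function f(c,ε) = 2c/((1−ε)(c−1)) + c/ε defined for c > 1 and 0 < ε < 1, the values c = 2^{1/3}+1 and ε = (4^{1/3} − 2^{1/3} + 1)/3 yield f(c,ε) = 3/(2^{1/3} − 1), and this is the minimum of f over its domain. -/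
/-!
Write `u = c - 1` and `w = 1 - ε`. Then `f(c, ε) = (u + 1) (w + ε) (2 / (w u) + 1 / ε)`, and
Hölder's inequality for three factors bounds this below by
`((u w · 2 / (w u))^{1/3} + (1 · ε · 1 / ε)^{1/3})^3 = (2^{1/3} + 1)^3`, which equals
`3 / (2^{1/3} - 1)` because `(t + 1)^3 (t - 1) = 3` when `t^3 = 2`.
-/

open Real

theorem rpow_one_third_pow_three {x : ℝ} (hx : 0 ≤ x) : (x ^ (1 / 3 : ℝ)) ^ 3 = x := by
  rw [← rpow_natCast, ← rpow_mul hx]; norm_num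

theorem rpow_third_mul_le_mul_add {a b c A B C : ℝ} (ha : 0 ≤ a) (hb : 0 ≤ b) (hc : 0 ≤ c)
    (hA : 0 < A) (hB : 0 < B) (hC : 0 < C) :
    (a * b * c) ^ (1 / 3 : ℝ) ≤ (A * B * C) ^ (1 / 3 : ℝ) * ((a / A + b / B + c / C) / 3) := by
  have amgm := geom_mean_le_arith_mean3_weighted (w₁ := 1 / 3) (w₂ := 1 / 3) (w₃ := 1 / 3)
    (by norm_num) (by norm_num) (by norm_num) (div_nonneg ha hA.le) (div_nonneg hb hB.le)
    (div_nonneg hc hC.le) (by norm_num)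
  rw [← mul_rpow (by positivity) (by positivity), ← mul_rpow (by positivity) (by positivity),
    show a / A * (b / B) * (c / C) = a * b * c / (A * B * C) by field_simp,
    div_rpow (by positivity) (by positivity), div_le_iff₀ (by positivity)] at amgm
  linarith

theorem rpow_third_add_pow_three_le {a₁ a₂ b₁ b₂ c₁ c₂ : ℝ} (ha₁ : 0 ≤ a₁) (ha₂ : 0 ≤ a₂)
    (hb₁ : 0 ≤ b₁) (hb₂ : 0 ≤ b₂) (hc₁ : 0 ≤ c₁) (hc₂ : 0 ≤ c₂)
    (hA : 0 < a₁ + a₂) (hB : 0 < b₁ + b₂) (hC : 0 < c₁ + c₂) :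
    ((a₁ * b₁ * c₁) ^ (1 / 3 : ℝ) + (a₂ * b₂ * c₂) ^ (1 / 3 : ℝ)) ^ 3 ≤
      (a₁ + a₂) * (b₁ + b₂) * (c₁ + c₂) := by
  have h₁ := rpow_third_mul_le_mul_add ha₁ hb₁ hc₁ hA hB hC
  have h₂ := rpow_third_mul_le_mul_add ha₂ hb₂ hc₂ hA hB hC
  have hweights : (a₁ / (a₁ + a₂) + b₁ / (b₁ + b₂) + c₁ / (c₁ + c₂)) / 3 +
      (a₂ / (a₁ + a₂) + b₂ / (b₁ + b₂) + c₂ / (c₁ + c₂)) / 3 = 1 := by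
    field_simp; ring
  have hsum : (a₁ * b₁ * c₁) ^ (1 / 3 : ℝ) + (a₂ * b₂ * c₂) ^ (1 / 3 : ℝ) ≤
      ((a₁ + a₂) * (b₁ + b₂) * (c₁ + c₂)) ^ (1 / 3 : ℝ) := by
    calc _ ≤ _ := add_le_add h₁ h₂
      _ = _ := by rw [← mul_add, hweights, mul_one]
  calc _ ≤ (((a₁ + a₂) * (b₁ + b₂) * (c₁ + c₂)) ^ (1 / 3 : ℝ)) ^ 3 :=
        pow_le_pow_left₀ (by positivity) hsum 3
    _ = _ := rpow_one_third_pow_three (by positivity)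

theorem rpow_third_add_pow_three_le_div_add_div {a b c ε : ℝ} (ha : 0 < a) (hb : 0 ≤ b)
    (hc : 1 < c) (hε₀ : 0 < ε) (hε₁ : ε < 1) :
    (a ^ (1 / 3 : ℝ) + b ^ (1 / 3 : ℝ)) ^ 3 ≤ a * c / ((1 - ε) * (c - 1)) + b * c / ε := by
  have hc₁ : 0 < c - 1 := sub_pos.2 hc
  have hε : 0 < 1 - ε := sub_pos.2 hε₁
  have holder := rpow_third_add_pow_three_le hc₁.le zero_le_one hε.le hε₀.le
    (c₁ := a / ((1 - ε) * (c - 1))) (c₂ := b / ε) (by positivity) (by positivity)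
    (by linarith) (by linarith) (by positivity)
  have h₁ : (c - 1) * (1 - ε) * (a / ((1 - ε) * (c - 1))) = a := by field_simp
  have h₂ : 1 * ε * (b / ε) = b := by field_simp
  rw [h₁, h₂] at holder
  calc _ ≤ _ := holder
    _ = _ := by field_simp; ring

theorem value_at_minimizer {t : ℝ} (ht : t ^ 3 = 2) :
    2 * (t + 1) / ((1 - (t ^ 2 - t + 1) / 3) * (t + 1 - 1)) + (t + 1) / ((t ^ 2 - t + 1) / 3) =
      (t + 1) ^ 3 := by
  have ht₀ : t ≠ 0 := by rintro rfl; norm_num at ht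
  have hq : 0 < t ^ 2 - t + 1 := by nlinarith [sq_nonneg (t - 1)]
  have hden : (1 - (t ^ 2 - t + 1) / 3) * (t + 1 - 1) = t ^ 2 * (t ^ 2 - t + 1) / 3 := by
    linear_combination (-t / 3) * ht
  have h₁ : 2 * (t + 1) / (t ^ 2 * (t ^ 2 - t + 1) / 3) = t * (t + 1) ^ 2 := by
    rw [div_eq_iff (by positivity)]; linear_combination (-(t + 1) * (t ^ 3 + 3) / 3) * ht
  have h₂ : (t + 1) / ((t ^ 2 - t + 1) / 3) = (t + 1) ^ 2 := by
    rw [div_eq_iff (by positivity)]; linear_combination (-(t + 1) / 3) * ht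
  rw [hden, h₁, h₂]; ring

theorem stmt_12 :
    (∀ c ε : ℝ, 1 < c → 0 < ε → ε < 1 →
      2 * c / ((1 - ε) * (c - 1)) + c / ε ≥ 3 / ((2 : ℝ) ^ ((1 : ℝ) / 3) - 1)) ∧
    (2 * ((2 : ℝ) ^ ((1 : ℝ) / 3) + 1) /
        ((1 - ((4 : ℝ) ^ ((1 : ℝ) / 3) - (2 : ℝ) ^ ((1 : ℝ) / 3) + 1) / 3) *
          (((2 : ℝ) ^ ((1 : ℝ) / 3) + 1) - 1)) +
      ((2 : ℝ) ^ ((1 : ℝ) / 3) + 1) /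
        (((4 : ℝ) ^ ((1 : ℝ) / 3) - (2 : ℝ) ^ ((1 : ℝ) / 3) + 1) / 3) =
      3 / ((2 : ℝ) ^ ((1 : ℝ) / 3) - 1)) := by
  set t : ℝ := (2 : ℝ) ^ ((1 : ℝ) / 3) with ht
  have ht3 : t ^ 3 = 2 := rpow_one_third_pow_three (by norm_num)
  have ht1 : 1 < t := one_lt_rpow (by norm_num) (by norm_num)
  have h4 : (4 : ℝ) ^ ((1 : ℝ) / 3) = t ^ 2 := by
    rw [ht, ← rpow_natCast, ← rpow_mul (by norm_num), mul_comm, rpow_mul (by norm_num)]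
    norm_num
  have hmin : 3 / (t - 1) = (t + 1) ^ 3 := by
    rw [div_eq_iff (by linarith)]; linear_combination (-t - 2) * ht3
  rw [h4, hmin]
  refine ⟨fun c ε hc hε₀ hε₁ => ?_, value_at_minimizer ht3⟩
  have := rpow_third_add_pow_three_le_div_add_div two_pos zero_le_one hc hε₀ hε₁
  rwa [one_rpow, one_mul] at this
end

section
/- Suppose unit vector g = (x,y,z) ∈ ℝ³ and positive reals h, d, k, l, h_V, h_WU satisfy h ≥ d, k ≥ d/8, l ≥ d/4, 0 ≤ h_V ≤ h, |h_WU| ≤ h. Then at least one of the quantities |h·z|, |k·x + h_V·z|, |−k·x + (h−h_V)·z|, |l·y + h_WU·z| is at least d/(8√3). -/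
/-!
Suppose all four projections are shorter than `ε = d / (8√3)`. The first one gives `d |z| < ε`.
The second and third sum to `h z`, while their difference is `2 k x + (2 h_V - h) z` with
`|2 h_V - h| ≤ h`; hence `2 k |x| ≤ |A - B| + |A + B| = 2 max (|A|, |B|) < 2ε`, i.e. `d |x| < 8ε`.
The fourth, corrected by `h_WU z`, gives `l |y| < 2ε`, i.e. `d |y| < 8ε`.
Since `g` is a unit vector, `d² < (64 + 64 + 1) ε² = 129 d² / 192`, which is absurd.
-/

lemma abs_sub_add_abs_add_lt {a b ε : ℝ} (ha : |a| < ε) (hb : |b| < ε) :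
    |a - b| + |a + b| < 2 * ε := by
  rw [abs_lt] at ha hb
  rcases abs_cases (a - b) with ⟨h₁, -⟩ | ⟨h₁, -⟩ <;>
    rcases abs_cases (a + b) with ⟨h₂, -⟩ | ⟨h₂, -⟩ <;> linarith

lemma abs_mul_lt_mul_of_div_le {a b c t ε : ℝ} (hc : 0 < c) (ha : 0 ≤ a) (hab : a / c ≤ b)
    (h : |b * t| < ε) : |a * t| < c * ε :=
  calc |a * t| = c * (a / c * |t|) := by rw [abs_mul, abs_of_nonneg ha]; field_simp
    _ ≤ c * (b * |t|) := by gcongr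
    _ = c * |b * t| := by rw [abs_mul, abs_of_nonneg ((div_nonneg ha hc.le).trans hab)]
    _ < c * ε := by gcongr

lemma abs_mul_lt_of_abs_add_lt_of_abs_sub_lt {k x z h v ε : ℝ} (hv₀ : 0 ≤ v) (hvh : v ≤ h)
    (hA : |k * x + v * z| < ε) (hB : |(-k) * x + (h - v) * z| < ε) : |k * x| < ε := by
  set A := k * x + v * z
  set B := (-k) * x + (h - v) * z
  have hsum : A + B = h * z := by ring
  have hdiff : 2 * (k * x) = (A - B) + (h - 2 * v) * z := by ring
  have hcoef : |h - 2 * v| ≤ h := abs_le.mpr ⟨by linarith, by linarith⟩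
  have : 2 * |k * x| < 2 * ε :=
    calc 2 * |k * x| = |(A - B) + (h - 2 * v) * z| := by
          rw [← hdiff, abs_mul 2, abs_two]
      _ ≤ |A - B| + |h - 2 * v| * |z| := by rw [← abs_mul]; exact abs_add_le _ _
      _ ≤ |A - B| + h * |z| := by gcongr
      _ = |A - B| + |A + B| := by rw [hsum, abs_mul, abs_of_nonneg (hv₀.trans hvh)]
      _ < 2 * ε := abs_sub_add_abs_add_lt hA hB
  linarith

lemma abs_mul_lt_of_abs_add_mul_lt {l y w z h ε : ℝ} (hw : |w| ≤ h)
    (hC : |l * y + w * z| < ε) (hz : |h * z| < ε) : |l * y| < 2 * ε :=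
  calc |l * y| = |(l * y + w * z) - w * z| := by ring_nf
    _ ≤ |l * y + w * z| + |w| * |z| := by rw [← abs_mul]; exact abs_sub _ _
    _ ≤ |l * y + w * z| + |h * z| := by
        rw [abs_mul h, abs_of_nonneg ((abs_nonneg w).trans hw)]; gcongr
    _ < 2 * ε := by linarith

lemma sq_lt_of_abs_mul_lt {x y z d a b c : ℝ} (hg : x ^ 2 + y ^ 2 + z ^ 2 = 1)
    (hx : |d * x| < a) (hy : |d * y| < b) (hz : |d * z| < c) :
    d ^ 2 < a ^ 2 + b ^ 2 + c ^ 2 := by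
  have hx' := sq_lt_sq' (abs_lt.mp hx).1 (abs_lt.mp hx).2
  have hy' := sq_lt_sq' (abs_lt.mp hy).1 (abs_lt.mp hy).2
  have hz' := sq_lt_sq' (abs_lt.mp hz).1 (abs_lt.mp hz).2
  linear_combination hx' + hy' + hz' - d ^ 2 * hg

theorem stmt_16_general (x y z h d k l h_V h_WU : ℝ)
    (hg : x ^ 2 + y ^ 2 + z ^ 2 = 1)
    (hhd : h ≥ d) (hk : k ≥ d / 8) (hl : l ≥ d / 4)
    (hV0 : 0 ≤ h_V) (hVh : h_V ≤ h) (hWU : |h_WU| ≤ h) :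
    |h * z| ≥ d / (8 * Real.sqrt 3) ∨
    |k * x + h_V * z| ≥ d / (8 * Real.sqrt 3) ∨
    |(-k) * x + (h - h_V) * z| ≥ d / (8 * Real.sqrt 3) ∨
    |l * y + h_WU * z| ≥ d / (8 * Real.sqrt 3) := by
  set ε := d / (8 * Real.sqrt 3) with hε
  by_contra! ⟨hz, hA, hB, hC⟩
  have hd : 0 < d := by
    have : 0 < ε := (abs_nonneg _).trans_lt hz
    rwa [hε, div_pos_iff_of_pos_right (by positivity)] at this
  have hdx : |d * x| < 8 * ε := abs_mul_lt_mul_of_div_le (by norm_num) hd.le hk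
    (abs_mul_lt_of_abs_add_lt_of_abs_sub_lt hV0 hVh hA hB)
  have hdy : |d * y| < 4 * (2 * ε) := abs_mul_lt_mul_of_div_le (by norm_num) hd.le hl
    (abs_mul_lt_of_abs_add_mul_lt hWU hC hz)
  have hdz : |d * z| < 1 * ε := abs_mul_lt_mul_of_div_le one_pos hd.le (by rwa [div_one]) hz
  have hsq : d ^ 2 < 129 * ε ^ 2 := by linarith [sq_lt_of_abs_mul_lt hg hdx hdy hdz]
  have hε2 : ε ^ 2 = d ^ 2 / 192 := by
    rw [hε, div_pow, mul_pow, Real.sq_sqrt (by norm_num)]; ring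
  linarith [pow_pos hd 2]

theorem stmt_16 (x y z h d k l h_V h_WU : ℝ)
    (hg : x ^ 2 + y ^ 2 + z ^ 2 = 1)
    (hd : 0 < d) (hhd : h ≥ d) (hk : k ≥ d / 8) (hl : l ≥ d / 4)
    (hV0 : 0 ≤ h_V) (hVh : h_V ≤ h) (hWU : |h_WU| ≤ h) :
    |h * z| ≥ d / (8 * Real.sqrt 3) ∨
    |k * x + h_V * z| ≥ d / (8 * Real.sqrt 3) ∨
    |(-k) * x + (h - h_V) * z| ≥ d / (8 * Real.sqrt 3) ∨
    |l * y + h_WU * z| ≥ d / (8 * Real.sqrt 3) :=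
  stmt_16_general x y z h d k l h_V h_WU hg hhd hk hl hV0 hVh hWU
end
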